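/- If the diameter of the metric space (X,d) is at most 2^(1/p)·C, then for finite point patterns ξ = {x₁,…,x_m} and η = {y₁,…,y_n} with m ≤ n, the relative transport–transform distance satisfies τ̄(ξ,η)^p = (1/n)·((n−m)·C^p + min_{π ∈ S_n} Σ_{i=1}^m d(x_i, y_{π(i)})^p), i.e. the RTT-metric coincides with the OSPA metric. -/

import Mathlib

/-- `p`-th power of the transport-transform distance between finite point patterns. -/
noncomputable def ttP {X : Type*} [MetricSpace X] (C p : ℝ) (ξ η : Multiset X) : ℝ :=
  sInf { c : ℝ | ∃ γ : Multiset (X × X),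
    γ.map Prod.fst ≤ ξ ∧ γ.map Prod.snd ≤ η ∧
    c = ((Multiset.card ξ : ℝ) + Multiset.card η - 2 * Multiset.card γ) * C ^ p
        + (γ.map (fun z => dist z.1 z.2 ^ p)).sum }

/-- The transport-transform (TT) distance `τ_{C,p}`. -/
noncomputable def ttDist {X : Type*} [MetricSpace X] (C p : ℝ) (ξ η : Multiset X) : ℝ :=
  ttP C p ξ η ^ (1 / p)

-- The relative transport-transform (RTT) distance `τ̄_{C,p}`.
open Classical in
noncomputable def rttDist {X : Type*} [MetricSpace X] (C p : ℝ) (ξ η : Multiset X) : ℝ :=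
  if ξ = 0 ∧ η = 0 then 0
  else ttDist C p ξ η / ((max (Multiset.card ξ) (Multiset.card η) : ℝ) ^ (1 / p))

/-! Any admissible partial matching of `ξ` into `η` can be completed to a matching of all of `ξ`
without increasing its cost: by the diameter bound an added pair costs `d(a, b)^p ≤ 2 C^p`, which
is exactly the penalty saved for its two points. A matching of all of `ξ = {x_i}` into
`η = {y_j}` is the graph of an injection `Fin m → Fin n`, i.e. of a permutation `π` of `Fin n`
restricted to `Fin m`, and its cost is `(n - m) C^p + ∑ d(x_i, y_{π i})^p`. Hence `τ^p` is
`(n - m) C^p` plus the OSPA minimum, and `max{m, n} = n`. -/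

namespace Multiset

variable {α β : Type*}

theorem exists_eq_ofFn_of_map_eq_ofFn {f : α → β} :
    ∀ {m : ℕ} {s : Multiset α} {x : Fin m → β}, s.map f = ↑(List.ofFn x) →
      ∃ w : Fin m → α, s = ↑(List.ofFn w) ∧ f ∘ w = x
  | 0, s, x, h => ⟨Fin.elim0, by simpa using h, funext fun i => i.elim0⟩
  | m + 1, s, x, h => by
    classical
    rw [List.ofFn_succ, ← cons_coe, ← map_eq_cons] at h
    obtain ⟨a, ha, hax, hrest⟩ := h
    obtain ⟨w, hw, hfw⟩ := exists_eq_ofFn_of_map_eq_ofFn hrest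
    refine ⟨Fin.cons a w, ?_, ?_⟩
    · rw [List.ofFn_succ, ← cons_coe]
      simpa [← hw] using (cons_erase ha).symm
    · ext i
      cases i using Fin.cases
      · simp [hax]
      · simp [← congrFun hfw]

theorem exists_le_map_eq_of_le_map {f : α → β} {s : Multiset α} {t : Multiset β}
    (h : t ≤ s.map f) : ∃ u ≤ s, u.map f = t := by
  induction s using Quotient.inductionOn with | _ ls => ?_
  induction t using Quotient.inductionOn with | _ lt => ?_
  obtain ⟨l, hperm, hsub⟩ := coe_le.1 h
  obtain ⟨l', hl', rfl⟩ := List.sublist_map_iff.1 hsub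
  exact ⟨l', hl'.subperm, coe_eq_coe.2 hperm⟩

theorem exists_map_fst_eq_map_snd_le (s : Multiset α) (t : Multiset β) (h : card s ≤ card t) :
    ∃ δ : Multiset (α × β), δ.map Prod.fst = s ∧ δ.map Prod.snd ≤ t := by
  induction s using Quotient.inductionOn with | _ ls => ?_
  induction t using Quotient.inductionOn with | _ lt => ?_
  have hlen : (lt.take ls.length).length = ls.length := by simpa using h
  refine ⟨ls.zip (lt.take ls.length), ?_, ?_⟩
  · rw [map_coe, List.map_fst_zip hlen.ge]
    rfl
  · rw [map_coe, List.map_snd_zip hlen.le]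
    exact coe_le.2 (List.take_sublist _ _).subperm

end Multiset

theorem exists_injective_of_ofFn_le_ofFn {β : Type*} {m n : ℕ} {z : Fin m → β}
    {y : Fin n → β}
    (h : (↑(List.ofFn z) : Multiset β) ≤ ↑(List.ofFn y)) :
    ∃ j : Fin m → Fin n, Function.Injective j ∧ y ∘ j = z := by
  rw [← Fin.univ_val_map y] at h
  obtain ⟨u, hu, huz⟩ := Multiset.exists_le_map_eq_of_le_map h
  obtain ⟨j, rfl, hj⟩ := Multiset.exists_eq_ofFn_of_map_eq_ofFn huz
  have hnodup : (↑(List.ofFn j) : Multiset (Fin n)).Nodup :=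
    Multiset.nodup_of_le hu Finset.univ.nodup
  exact ⟨j, List.nodup_ofFn.1 (Multiset.coe_nodup.1 hnodup), hj⟩

theorem ofFn_comp_le_ofFn {β : Type*} {m n : ℕ} (y : Fin n → β) {j : Fin m → Fin n}
    (hj : Function.Injective j) :
    (↑(List.ofFn (y ∘ j)) : Multiset β) ≤ ↑(List.ofFn y) := by
  rw [← Fin.univ_val_map, ← Fin.univ_val_map, ← Multiset.map_map]
  refine Multiset.map_le_map ((Multiset.le_iff_subset (Finset.univ.nodup.map hj)).2 ?_)
  exact fun i _ => Finset.mem_univ i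

theorem exists_perm_eq_ofFn_of_map_fst_eq {α β : Type*} {m n : ℕ} (hmn : m ≤ n)
    {x : Fin m → α} {y : Fin n → β} {γ : Multiset (α × β)}
    (hfst : γ.map Prod.fst = ↑(List.ofFn x)) (hsnd : γ.map Prod.snd ≤ ↑(List.ofFn y)) :
    ∃ π : Equiv.Perm (Fin n), γ = ↑(List.ofFn fun i => (x i, y (π (Fin.castLE hmn i)))) := by
  obtain ⟨w, rfl, hwx⟩ := Multiset.exists_eq_ofFn_of_map_eq_ofFn hfst
  rw [Multiset.map_coe, List.map_ofFn] at hsnd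
  obtain ⟨j, hj, hyj⟩ := exists_injective_of_ofFn_le_ofFn hsnd
  obtain ⟨π, hπ⟩ := Equiv.Perm.exists_extending_pair _ j (Fin.castLE_injective hmn) hj
  refine ⟨π, congrArg _ (congrArg _ (funext fun i => Prod.ext ?_ ?_))⟩
  · exact congrFun hwx i
  · rw [hπ]
    exact (congrFun hyj i).symm

theorem Real.rpow_le_two_mul_rpow_of_le {p C d : ℝ} (hp : 0 < p) (hC : 0 ≤ C) (hd : 0 ≤ d)
    (h : d ≤ 2 ^ (1 / p) * C) : d ^ p ≤ 2 * C ^ p := by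
  calc d ^ p ≤ (2 ^ (1 / p) * C) ^ p := Real.rpow_le_rpow hd h hp.le
    _ = 2 * C ^ p := by
      rw [Real.mul_rpow (by positivity) hC, ← Real.rpow_mul zero_le_two,
        one_div_mul_cancel hp.ne', Real.rpow_one]

section TransportTransform

open Multiset

variable {X : Type*} [MetricSpace X] (C p : ℝ)

noncomputable def ttCost (ξ η : Multiset X) (γ : Multiset (X × X)) : ℝ :=
  ((card ξ : ℝ) + card η - 2 * card γ) * C ^ p + (γ.map fun z => dist z.1 z.2 ^ p).sum

theorem ttCost_ofFn {m n : ℕ} (x : Fin m → X) (y : Fin n → X) (z : Fin m → X) :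
    ttCost C p (List.ofFn x : Multiset X) (List.ofFn y) (List.ofFn fun i => (x i, z i)) =
      ((n : ℝ) - m) * C ^ p + ∑ i, dist (x i) (z i) ^ p := by
  simp only [ttCost, coe_card, List.length_ofFn, map_coe, List.map_ofFn, sum_coe, List.sum_ofFn,
    Function.comp_def]
  ring

theorem exists_map_fst_eq_ttCost_le (hd : ∀ a b : X, dist a b ^ p ≤ 2 * C ^ p)
    {ξ η : Multiset X} (hcard : card ξ ≤ card η) {γ : Multiset (X × X)}
    (hfst : γ.map Prod.fst ≤ ξ) (hsnd : γ.map Prod.snd ≤ η) :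
    ∃ γ' : Multiset (X × X), γ'.map Prod.fst = ξ ∧ γ'.map Prod.snd ≤ η ∧
      ttCost C p ξ η γ' ≤ ttCost C p ξ η γ := by
  classical
  obtain ⟨δ, hδfst, hδsnd⟩ :=
    exists_map_fst_eq_map_snd_le (ξ - γ.map Prod.fst) (η - γ.map Prod.snd) (by
      have := card_le_card hfst
      rw [card_sub hfst, card_sub hsnd, card_map, card_map] at *
      omega)
  refine ⟨γ + δ, ?_, ?_, ?_⟩
  · rw [Multiset.map_add, hδfst, add_tsub_cancel_of_le hfst]
  · rw [Multiset.map_add, ← add_tsub_cancel_of_le hsnd]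
    exact add_le_add_right hδsnd _
  · have hδ : (δ.map fun z => dist z.1 z.2 ^ p).sum ≤ card δ * (2 * C ^ p) := by
      simpa using sum_le_card_nsmul (δ.map fun z => dist z.1 z.2 ^ p) (2 * C ^ p)
        (by simpa using fun _ a b _ h => h ▸ hd a b)
    simp only [ttCost, Multiset.map_add, sum_add, card_add, Nat.cast_add]
    linarith

theorem ttP_ofFn_eq (hd : ∀ a b : X, dist a b ^ p ≤ 2 * C ^ p) {m n : ℕ} (hmn : m ≤ n)
    (x : Fin m → X) (y : Fin n → X) :
    ttP C p (List.ofFn x : Multiset X) (List.ofFn y) =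
      ((n : ℝ) - m) * C ^ p + ⨅ π : Equiv.Perm (Fin n),
        ∑ i : Fin m, dist (x i) (y (π (Fin.castLE hmn i))) ^ p := by
  set F := fun π : Equiv.Perm (Fin n) => ∑ i : Fin m, dist (x i) (y (π (Fin.castLE hmn i))) ^ p
  obtain ⟨π₀, hπ₀⟩ := exists_eq_ciInf_of_finite (f := F)
  refine IsLeast.csInf_eq
    ⟨⟨↑(List.ofFn fun i => (x i, y (π₀ (Fin.castLE hmn i)))), ?_, ?_, ?_⟩, ?_⟩
  · rw [map_coe, List.map_ofFn]
    rfl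
  · rw [map_coe, List.map_ofFn]
    exact ofFn_comp_le_ofFn y (π₀.injective.comp (Fin.castLE_injective hmn))
  · rw [← hπ₀]
    exact (ttCost_ofFn C p x y _).symm
  rintro c ⟨γ, hfst, hsnd, rfl⟩
  obtain ⟨γ', hfst', hsnd', hle⟩ :=
    exists_map_fst_eq_ttCost_le C p hd (by simpa using hmn) hfst hsnd
  obtain ⟨π, rfl⟩ := exists_perm_eq_ofFn_of_map_fst_eq hmn hfst' hsnd'
  calc ((n : ℝ) - m) * C ^ p + ⨅ π, F π ≤ ((n : ℝ) - m) * C ^ p + F π :=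
        add_le_add_right (ciInf_le (Set.finite_range F).bddBelow π) _
    _ = ttCost C p _ _ _ := (ttCost_ofFn C p x y _).symm
    _ ≤ _ := hle

end TransportTransform

/-- If `diam X ≤ 2^(1/p)·C`, the RTT-metric coincides with the OSPA metric. -/
theorem stmt6 {X : Type*} [MetricSpace X] (C p : ℝ) (hC : 0 < C) (hp : 1 ≤ p)
    (hdiam : ∀ a b : X, dist a b ≤ (2 : ℝ) ^ (1 / p) * C)
    (m n : ℕ) (hmn : m ≤ n) (hn : 0 < n) (x : Fin m → X) (y : Fin n → X) :
    rttDist C p (Multiset.ofList (List.ofFn x)) (Multiset.ofList (List.ofFn y)) ^ p =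
    (1 / (n : ℝ)) * (((n : ℝ) - m) * C ^ p +
      sInf { c : ℝ | ∃ π : Equiv.Perm (Fin n),
        c = ∑ i : Fin m, dist (x i) (y (π (Fin.castLE hmn i))) ^ p }) := by
  have hp0 : 0 < p := zero_lt_one.trans_le hp
  have hd : ∀ a b : X, dist a b ^ p ≤ 2 * C ^ p := fun a b =>
    Real.rpow_le_two_mul_rpow_of_le hp0 hC.le dist_nonneg (hdiam a b)
  have hne : ¬((List.ofFn x : Multiset X) = 0 ∧ (List.ofFn y : Multiset X) = 0) := fun h => by
    simpa [hn.ne'] using congrArg Multiset.card h.2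
  have hsInf : sInf { c : ℝ | ∃ π : Equiv.Perm (Fin n),
      c = ∑ i : Fin m, dist (x i) (y (π (Fin.castLE hmn i))) ^ p } =
      ⨅ π : Equiv.Perm (Fin n), ∑ i : Fin m, dist (x i) (y (π (Fin.castLE hmn i))) ^ p :=
    congrArg sInf (Set.ext fun _ => exists_congr fun _ => eq_comm)
  have hV : 0 ≤ ((n : ℝ) - m) * C ^ p +
      ⨅ π : Equiv.Perm (Fin n), ∑ i : Fin m, dist (x i) (y (π (Fin.castLE hmn i))) ^ p := by
    have : (m : ℝ) ≤ n := by exact_mod_cast hmn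
    exact add_nonneg (mul_nonneg (by linarith) (by positivity))
      (Real.iInf_nonneg fun π => Finset.sum_nonneg fun i _ => by positivity)
  rw [rttDist, if_neg hne, ttDist, ttP_ofFn_eq C p hd hmn, hsInf]
  simp only [Multiset.coe_card, List.length_ofFn, max_eq_right (Nat.cast_le.2 hmn)]
  rw [← Real.div_rpow hV n.cast_nonneg, ← Real.rpow_mul (div_nonneg hV n.cast_nonneg),
    one_div_mul_cancel hp0.ne', Real.rpow_one, one_div_mul_eq_div]
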